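/- Let U ⊆ ℂ be open and X, Y complex Hilbert spaces. The set K := {σ ∈ Hol(U, Ses_b(X,Y)) : ‖σ(z)‖ ≤ 1 for all z ∈ U} is compact in the topology 𝒯_Λ̃. If both X and Y are separable, then (K, 𝒯_Λ̃) is metrisable. -/

import Mathlib

/-!
The map `σ ↦ ((φ, ψ) ↦ (z ↦ σ(z)(φ, ψ)))` embeds `(Hol(U, Ses_b(X,Y)), 𝒯_Λ̃)` into the product,
indexed by `X × Y`, of copies of `Hol(U, ℂ)`. The image of the unit ball consists of the families
that are sesquilinear in `(φ, ψ)` at every `z` and whose `(φ, ψ)`-member is holomorphic and bounded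
by `‖φ‖‖ψ‖`. These balls of `Hol(U, ℂ)` are compact by Montel's theorem (Arzelà–Ascoli, with
equicontinuity from the Cauchy estimates) and sesquilinearity is a closed condition, so the image
is compact by Tychonoff. That every such family comes from a norm-holomorphic `σ` is the one
non-formal step: the Cauchy estimates bound the second-order Taylor remainder of `z ↦ σ(z)(φ, ψ)`
by `C ‖φ‖‖ψ‖ |z - z₀|²`, uniformly in `(φ, ψ)`, which makes `σ` complex differentiable in operator
norm.

For separable `X` and `Y`, evaluation on countable dense subsets of `U`, `X` and `Y` is a
continuous injection of the compact ball into a countable power of `ℂ`, hence an embedding into a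
metrizable space.
-/

noncomputable section
open Filter Topology ContinuousLinearMap

namespace Paper

/-- Holomorphy of a function defined on (the subtype of) a set `U ⊆ ℂ`:
it extends to a function `ℂ → E` differentiable on `U`. -/
def HolFn (U : Set ℂ) {E : Type*} [NormedAddCommGroup E] [NormedSpace ℂ E]
    (f : ↥U → E) : Prop :=
  ∃ g : ℂ → E, DifferentiableOn ℂ g U ∧ ∀ z : ↥U, f z = g (z : ℂ)

/-- The topology of locally uniform (compact) convergence on functions `↥U → E`. -/
def kc (U : Set ℂ) (E : Type*) [UniformSpace E] : TopologicalSpace (↥U → E) :=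
  (UniformOnFun.uniformSpace ↥U E {K : Set ↥U | IsCompact K}).toTopologicalSpace

/-- Bounded sesquilinear forms on `X × Y` (linear in the first, conjugate-linear in the
second argument), realised as `X →L[ℂ] (Y →L⋆[ℂ] ℂ)`; the operator norm coincides with
the sesquilinear sup-norm. -/
abbrev Sesq (X Y : Type*) [NormedAddCommGroup X] [NormedSpace ℂ X]
    [NormedAddCommGroup Y] [NormedSpace ℂ Y] := X →L[ℂ] (Y →L⋆[ℂ] ℂ)

/-- The topology `𝒯_Λ̃` on sesquilinear-form-valued functions on `U`: the initial topology
w.r.t. `σ ↦ (z ↦ σ(z)(φ,ψ)) ∈ Hol(U,ℂ)` (compact convergence). -/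
def luses (U : Set ℂ) (X Y : Type*) [NormedAddCommGroup X] [NormedSpace ℂ X]
    [NormedAddCommGroup Y] [NormedSpace ℂ Y] :
    TopologicalSpace (↥U → Sesq X Y) :=
  ⨅ (p : X × Y),
    TopologicalSpace.induced (fun σ => fun z : ↥U => σ z p.1 p.2) (kc U ℂ)

/-- The map sending an operator `T` to its associated sesquilinear form
`(φ, ψ) ↦ ⟨Tφ, ψ⟩_Y` (linear in `φ`, conjugate-linear in `ψ`). -/
def Gop {X Y : Type*} [NormedAddCommGroup X] [InnerProductSpace ℂ X]
    [NormedAddCommGroup Y] [InnerProductSpace ℂ Y] (T : X →L[ℂ] Y) : Sesq X Y :=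
  (innerSL ℂ).flip ∘L T

/-- The closed unit ball of `Hol(U, Ses_b(X,Y))`. -/
def sesBall (U : Set ℂ) (X Y : Type*) [NormedAddCommGroup X] [NormedSpace ℂ X]
    [NormedAddCommGroup Y] [NormedSpace ℂ Y] : Set (↥U → Sesq X Y) :=
  {σ | HolFn U σ ∧ ∀ z : ↥U, ‖σ z‖ ≤ 1}

open Metric Set TopologicalSpace

section CauchyEstimates

variable {E : Type*} [NormedAddCommGroup E] [NormedSpace ℂ E] {f : ℂ → E} {z₀ z : ℂ} {r M : ℝ}

theorem norm_deriv_le_of_differentiableOn_closedBall (hr : 0 < r)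
    (hd : DifferentiableOn ℂ f (closedBall z₀ r)) (hM : ∀ w ∈ closedBall z₀ r, ‖f w‖ ≤ M) :
    ‖deriv f z₀‖ ≤ M / r :=
  Complex.norm_deriv_le_of_forall_mem_sphere_norm_le hr (hd.diffContOnCl_ball subset_rfl)
    fun w hw => hM w (sphere_subset_closedBall hw)

theorem norm_sub_sub_smul_deriv_le [CompleteSpace E] (hr : 0 < r)
    (hd : DifferentiableOn ℂ f (closedBall z₀ r)) (hM : ∀ w ∈ closedBall z₀ r, ‖f w‖ ≤ M) (hz : z ∈ closedBall z₀ r) :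
    ‖f z - f z₀ - (z - z₀) • deriv f z₀‖ ≤ 3 * M / r ^ 2 * ‖z - z₀‖ ^ 2 := by
  have hnhds : closedBall z₀ r ∈ 𝓝 z₀ := closedBall_mem_nhds z₀ hr
  have hderiv := norm_deriv_le_of_differentiableOn_closedBall hr hd hM
  -- The remainder is `(w - z₀) ^ 2 • q w` for the second divided difference `q`, which is
  -- holomorphic, so the maximum modulus principle bounds it by its values on the circle.
  set q := dslope (dslope f z₀) z₀
  have hrem : ∀ w, f w - f z₀ - (w - z₀) • deriv f z₀ = (w - z₀) ^ 2 • q w := fun w => by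
    rw [pow_two, mul_smul, sub_smul_dslope, dslope_same, smul_sub, sub_smul_dslope]
  have hq : DifferentiableOn ℂ q (closedBall z₀ r) :=
    (Complex.differentiableOn_dslope hnhds).2 ((Complex.differentiableOn_dslope hnhds).2 hd)
  have hq_sphere : ∀ w ∈ frontier (ball z₀ r), ‖q w‖ ≤ 3 * M / r ^ 2 := by
    intro w hw
    rw [frontier_ball z₀ hr.ne', mem_sphere_iff_norm] at hw
    have hw' : w ∈ closedBall z₀ r := by rw [mem_closedBall_iff_norm, hw]
    have hnorm : ‖(w - z₀) ^ 2 • q w‖ ≤ 3 * M := by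
      rw [← hrem]
      calc ‖f w - f z₀ - (w - z₀) • deriv f z₀‖
          ≤ ‖f w‖ + ‖f z₀‖ + ‖w - z₀‖ * ‖deriv f z₀‖ := by
            grw [norm_sub_le, norm_sub_le, norm_smul]
        _ ≤ M + M + r * (M / r) := by
            gcongr
            · exact hM w hw'
            · exact hM z₀ (mem_closedBall_self hr.le)
            · exact hw.le
        _ = 3 * M := by field_simp; ring
    rw [norm_smul, norm_pow, hw] at hnorm
    rwa [le_div_iff₀ (by positivity), mul_comm]
  have hqz : ‖q z‖ ≤ 3 * M / r ^ 2 :=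
    Complex.norm_le_of_forall_mem_frontier_norm_le isBounded_ball
      (hq.diffContOnCl_ball subset_rfl) hq_sphere (by rwa [closure_ball z₀ hr.ne'])
  rw [hrem, norm_smul, norm_pow, mul_comm]
  gcongr

theorem norm_sub_le_of_differentiableOn_closedBall [CompleteSpace E] (hr : 0 < r)
    (hd : DifferentiableOn ℂ f (closedBall z₀ r)) (hM : ∀ w ∈ closedBall z₀ r, ‖f w‖ ≤ M)
    (hz : z ∈ closedBall z₀ r) : ‖f z - f z₀‖ ≤ 4 * M / r * ‖z - z₀‖ := by
  have hM0 : 0 ≤ M := (norm_nonneg _).trans (hM z₀ (mem_closedBall_self hr.le))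
  have hzr : ‖z - z₀‖ ≤ r := mem_closedBall_iff_norm.1 hz
  calc ‖f z - f z₀‖ ≤ ‖f z - f z₀ - (z - z₀) • deriv f z₀‖ + ‖z - z₀‖ * ‖deriv f z₀‖ := by
        rw [← norm_smul]; exact norm_le_norm_sub_add _ _
    _ ≤ 3 * M / r ^ 2 * ‖z - z₀‖ ^ 2 + ‖z - z₀‖ * (M / r) := by
        grw [norm_sub_sub_smul_deriv_le hr hd hM hz,
          norm_deriv_le_of_differentiableOn_closedBall hr hd hM]
    _ = (3 * M / r ^ 2 * ‖z - z₀‖ + M / r) * ‖z - z₀‖ := by ring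
    _ ≤ (3 * M / r ^ 2 * r + M / r) * ‖z - z₀‖ := by gcongr
    _ = 4 * M / r * ‖z - z₀‖ := by field_simp; ring

end CauchyEstimates

section WeakHolomorphy

variable {τ : ℂ →+* ℂ} [RingHomIsometric τ] {E F G : Type*}
  [NormedAddCommGroup E] [NormedSpace ℂ E] [NormedAddCommGroup F] [NormedSpace ℂ F]
  [NormedAddCommGroup G] [NormedSpace ℂ G] [CompleteSpace G]

theorem differentiableAt_of_forall_apply {f : ℂ → F →SL[τ] G} {z₀ : ℂ} {r M : ℝ} (hr : 0 < r)
    (hM : ∀ z ∈ closedBall z₀ r, ‖f z‖ ≤ M)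
    (hf : ∀ x, DifferentiableOn ℂ (fun z => f z x) (closedBall z₀ r)) :
    DifferentiableAt ℂ f z₀ := by
  have hMx : ∀ x, ∀ z ∈ closedBall z₀ r, ‖f z x‖ ≤ M * ‖x‖ := fun x z hz =>
    (f z).le_of_opNorm_le (hM z hz) x
  have hfx : ∀ x, DifferentiableAt ℂ (fun z => f z x) z₀ := fun x =>
    (hf x).differentiableAt (closedBall_mem_nhds z₀ hr)
  let D : F →SL[τ] G := LinearMap.mkContinuous
    { toFun := fun x => deriv (fun z => f z x) z₀
      map_add' := fun x y => by simp only [map_add]; exact deriv_add (hfx x) (hfx y)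
      map_smul' := fun c x => by simp only [map_smulₛₗ]; exact deriv_const_smul _ (hfx x) }
    (M / r) fun x => by
      rw [← mul_div_right_comm]
      exact norm_deriv_le_of_differentiableOn_closedBall hr (hf x) (hMx x)
  have hrem : ∀ z ∈ closedBall z₀ r,
      ‖f z - f z₀ - (z - z₀) • D‖ ≤ 3 * M / r ^ 2 * ‖z - z₀‖ ^ 2 := fun z hz => by
    have hM0 : 0 ≤ M := (norm_nonneg _).trans (hM z₀ (mem_closedBall_self hr.le))
    refine ContinuousLinearMap.opNorm_le_bound _ (by positivity) fun x => ?_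
    convert norm_sub_sub_smul_deriv_le hr (hf x) (hMx x) hz using 1
    · rfl
    · ring
  have hD : HasDerivAt f D z₀ := by
    refine hasDerivAt_iff_isLittleO.2 (Asymptotics.IsBigO.trans_isLittleO ?_
      (Asymptotics.isLittleO_pow_sub_sub z₀ one_lt_two))
    refine Asymptotics.IsBigO.of_bound (3 * M / r ^ 2) ?_
    filter_upwards [closedBall_mem_nhds z₀ hr] with z hz
    simpa using hrem z hz
  exact hD.differentiableAt

theorem differentiableOn_of_forall_apply {U : Set ℂ} (hU : IsOpen U) {f : ℂ → F →SL[τ] G} {M : ℝ}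
    (hM : ∀ z ∈ U, ‖f z‖ ≤ M) (hf : ∀ x, DifferentiableOn ℂ (fun z => f z x) U) :
    DifferentiableOn ℂ f U := by
  intro z₀ hz₀
  obtain ⟨r, hr, hball⟩ := nhds_basis_closedBall.mem_iff.1 (hU.mem_nhds hz₀)
  exact (differentiableAt_of_forall_apply hr (fun z hz => hM z (hball hz))
    fun x => (hf x).mono hball).differentiableWithinAt

theorem differentiableOn_of_forall_apply_apply {U : Set ℂ} (hU : IsOpen U)
    {f : ℂ → E →L[ℂ] F →SL[τ] G} {M : ℝ} (hM : ∀ z ∈ U, ‖f z‖ ≤ M)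
    (hf : ∀ x y, DifferentiableOn ℂ (fun z => f z x y) U) : DifferentiableOn ℂ f U :=
  differentiableOn_of_forall_apply hU hM fun x =>
    differentiableOn_of_forall_apply hU (fun z hz => (f z).le_of_opNorm_le (hM z hz) x) (hf x)

end WeakHolomorphy

section HolFn

variable {U : Set ℂ} {E : Type*} [NormedAddCommGroup E] [NormedSpace ℂ E]

theorem holFn_iff_differentiableOn_extend {f : ↥U → E} :
    HolFn U f ↔ DifferentiableOn ℂ (Function.extend Subtype.val f 0) U := by
  constructor
  · rintro ⟨g, hg, hfg⟩
    refine hg.congr fun z hz => ?_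
    rw [← hfg ⟨z, hz⟩]
    exact Subtype.val_injective.extend_apply f 0 ⟨z, hz⟩
  · exact fun h => ⟨_, h, fun z => (Subtype.val_injective.extend_apply f 0 z).symm⟩

theorem HolFn.continuous {f : ↥U → E} (hf : HolFn U f) : Continuous f := by
  obtain ⟨g, hg, hfg⟩ := hf
  rw [funext hfg]
  exact hg.continuousOn.comp_continuous continuous_subtype_val Subtype.prop

theorem HolFn.clm_apply {τ : ℂ →+* ℂ} [RingHomIsometric τ] {F : Type*} [NormedAddCommGroup F]
    [NormedSpace ℂ F] {f : ↥U → E →SL[τ] F} (hf : HolFn U f) (x : E) :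
    HolFn U fun z => f z x := by
  obtain ⟨g, hg, hfg⟩ := hf
  exact ⟨fun z => g z x, (apply' F τ x).differentiable.comp_differentiableOn hg,
    fun z => congrArg (· x) (hfg z)⟩

theorem holFn_of_forall_apply_apply (hU : IsOpen U) {τ : ℂ →+* ℂ} [RingHomIsometric τ]
    {F G : Type*} [NormedAddCommGroup F] [NormedSpace ℂ F] [NormedAddCommGroup G]
    [NormedSpace ℂ G] [CompleteSpace G] {f : ↥U → E →L[ℂ] F →SL[τ] G} {M : ℝ}
    (hM : ∀ z, ‖f z‖ ≤ M) (hf : ∀ x y, HolFn U fun z => f z x y) : HolFn U f := by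
  have hext : ∀ z : ↥U, Function.extend Subtype.val f 0 z = f z :=
    Subtype.val_injective.extend_apply f 0
  rw [holFn_iff_differentiableOn_extend]
  refine differentiableOn_of_forall_apply_apply hU (fun z hz => hext ⟨z, hz⟩ ▸ hM _) fun x y => ?_
  refine (holFn_iff_differentiableOn_extend.1 (hf x y)).congr fun z hz => ?_
  rw [hext ⟨z, hz⟩, Subtype.val_injective.extend_apply (fun z => f z x y) 0 ⟨z, hz⟩]

end HolFn

theorem continuous_apply_kc {U : Set ℂ} {E : Type*} [UniformSpace E] (z : ↥U) :
    Continuous[kc U E, _] fun f : ↥U → E => f z :=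
  (UniformOnFun.uniformContinuous_eval_of_mem E _ (mem_singleton z) isCompact_singleton).continuous

section Montel

variable {U : Set ℂ} {E : Type*} [NormedAddCommGroup E] [NormedSpace ℂ E]

def holBall (U : Set ℂ) (E : Type*) [NormedAddCommGroup E] [NormedSpace ℂ E] (c : ℝ) :
    Set (↥U → E) :=
  {f | HolFn U f ∧ ∀ z, ‖f z‖ ≤ c}

theorem isClosed_setOf_holFn [CompleteSpace E] (hU : IsOpen U) :
    IsClosed[kc U E] {f : ↥U → E | HolFn U f} := by
  let := kc U E
  have := hU.locallyCompactSpace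
  refine isClosed_iff_clusterPt.2 fun f hf => ?_
  have : (𝓝 f ⊓ 𝓟 {f : ↥U → E | HolFn U f}).NeBot := hf
  have hlim : TendstoLocallyUniformlyOn (fun g => Function.extend Subtype.val g 0)
      (Function.extend Subtype.val f 0) (𝓝 f ⊓ 𝓟 {f : ↥U → E | HolFn U f}) U := by
    rw [tendstoLocallyUniformlyOn_iff_tendstoLocallyUniformly_comp_coe]
    simp only [Function.comp_def, Subtype.val_injective.extend_apply]
    rw [tendstoLocallyUniformly_iff_forall_isCompact]
    exact fun K hK => UniformOnFun.tendsto_iff_tendstoUniformlyOn.1 inf_le_left K hK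
  exact holFn_iff_differentiableOn_extend.2 <| hlim.differentiableOn
    (eventually_inf_principal.2 (.of_forall fun g hg => holFn_iff_differentiableOn_extend.1 hg)) hU

theorem isClosed_holBall [CompleteSpace E] (hU : IsOpen U) (c : ℝ) :
    IsClosed[kc U E] (holBall U E c) := by
  let := kc U E
  have : holBall U E c = {f | HolFn U f} ∩ ⋂ z, {f | ‖f z‖ ≤ c} := by
    ext f; simp [holBall]
  rw [this]
  exact (isClosed_setOf_holFn hU).inter
    (isClosed_iInter fun z => isClosed_le (continuous_apply_kc z).norm continuous_const)

theorem equicontinuous_holBall [CompleteSpace E] (hU : IsOpen U) (c : ℝ) :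
    Equicontinuous ((↑) : holBall U E c → ↥U → E) := by
  intro z₀
  obtain ⟨r, hr, hball⟩ := nhds_basis_closedBall.mem_iff.1 (hU.mem_nhds z₀.2)
  refine equicontinuousAt_of_continuity_modulus (fun z => 4 * c / r * dist z₀ z)
    ?_ _ ?_
  · exact (continuous_const.mul (continuous_const.dist continuous_id)).tendsto' z₀ 0 (by simp)
  · filter_upwards [continuous_subtype_val.continuousAt.preimage_mem_nhds
      (closedBall_mem_nhds (z₀ : ℂ) hr)] with z hz
    rintro ⟨f, ⟨g, hg, hfg⟩, hfc⟩
    have hgc : ∀ w ∈ closedBall (z₀ : ℂ) r, ‖g w‖ ≤ c := fun w hw => hfg ⟨w, hball hw⟩ ▸ hfc _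
    show dist (f z₀) (f z) ≤ 4 * c / r * dist z₀ z
    rw [dist_comm, dist_comm z₀, Subtype.dist_eq, dist_eq_norm, dist_eq_norm, hfg, hfg]
    exact norm_sub_le_of_differentiableOn_closedBall hr (hg.mono hball) hgc hz

theorem isCompact_holBall [ProperSpace E] (hU : IsOpen U) (c : ℝ) :
    @IsCompact _ (kc U E) (holBall U E c) := by
  have := ArzelaAscoli.isCompact_closure_of_isClosedEmbedding
    (ι := UniformOnFun ↥U E {K | IsCompact K}) (F := UniformOnFun.toFun _) (fun _ hK => hK)
    .id (s := holBall U E c) (fun K _ => (equicontinuous_holBall hU c).equicontinuousOn K)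
    fun _ _ z _ => ⟨closedBall 0 c, isCompact_closedBall 0 c,
      fun f hf => mem_closedBall_zero_iff.2 (hf.2 z)⟩
  exact @IsClosed.closure_eq _ (kc U E) _ (isClosed_holBall hU c) ▸ this

end Montel

theorem ContinuousLinearMap.ext_of_dense₂ {τ : ℂ →+* ℂ} {E F G : Type*}
    [NormedAddCommGroup E] [NormedSpace ℂ E] [NormedAddCommGroup F] [NormedSpace ℂ F]
    [NormedAddCommGroup G] [NormedSpace ℂ G] {A B : E →L[ℂ] F →SL[τ] G} {s : Set E} {t : Set F}
    (hs : Dense s) (ht : Dense t) (h : ∀ x ∈ s, ∀ y ∈ t, A x y = B x y) : A = B :=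
  DFunLike.coe_injective <| A.continuous.ext_on hs B.continuous fun x hx =>
    DFunLike.coe_injective <| (A x).continuous.ext_on ht (B x).continuous (h x hx)

section SesqForms

variable {U : Set ℂ} {X Y : Type*} [NormedAddCommGroup X] [NormedSpace ℂ X]
  [NormedAddCommGroup Y] [NormedSpace ℂ Y]

def IsSesquilinear (B : X → Y → ℂ) : Prop :=
  (∀ φ φ' ψ, B (φ + φ') ψ = B φ ψ + B φ' ψ) ∧ (∀ (c : ℂ) φ ψ, B (c • φ) ψ = c * B φ ψ) ∧
    (∀ φ ψ ψ', B φ (ψ + ψ') = B φ ψ + B φ ψ') ∧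
    (∀ (c : ℂ) φ ψ, B φ (c • ψ) = starRingEnd ℂ c * B φ ψ)

theorem isClosed_setOf_isSesquilinear : IsClosed {B : X → Y → ℂ | IsSesquilinear B} := by
  simp only [IsSesquilinear, ofPred_and, ofPred_forall]
  refine .inter ?_ (.inter ?_ (.inter ?_ ?_)) <;>
    exact isClosed_iInter fun _ => isClosed_iInter fun _ => isClosed_iInter fun _ =>
      isClosed_eq (by fun_prop) (by fun_prop)

def IsSesquilinear.toSesq {B : X → Y → ℂ} (hB : IsSesquilinear B) (C : ℝ)
    (hC : ∀ φ ψ, ‖B φ ψ‖ ≤ C * ‖φ‖ * ‖ψ‖) : Sesq X Y :=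
  LinearMap.mkContinuous₂ (LinearMap.mk₂'ₛₗ (RingHom.id ℂ) (starRingEnd ℂ) B hB.1
    (fun c φ ψ => hB.2.1 c φ ψ) hB.2.2.1 (fun c φ ψ => hB.2.2.2 c φ ψ)) C hC

theorem IsSesquilinear.norm_toSesq_le {B : X → Y → ℂ} (hB : IsSesquilinear B) {C : ℝ}
    (hC0 : 0 ≤ C) (hC : ∀ φ ψ, ‖B φ ψ‖ ≤ C * ‖φ‖ * ‖ψ‖) : ‖hB.toSesq C hC‖ ≤ C :=
  LinearMap.mkContinuous₂_norm_le _ hC0 hC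

def sesqCoeffs (σ : ↥U → Sesq X Y) : X × Y → ↥U → ℂ :=
  fun p z => σ z p.1 p.2

theorem isEmbedding_sesqCoeffs :
    @IsEmbedding _ _ (luses U X Y) (@Pi.topologicalSpace _ _ fun _ => kc U ℂ) sesqCoeffs := by
  let := kc U ℂ
  have hind : luses U X Y = .induced sesqCoeffs Pi.topologicalSpace := by
    rw [Pi.topologicalSpace, induced_iInf]
    exact iInf_congr fun p => by rw [induced_compose]; rfl
  let := luses U X Y
  exact ⟨⟨hind⟩, fun σ τ h => by
    ext z φ ψ
    exact congrFun (congrFun h (φ, ψ)) z⟩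

theorem image_sesqCoeffs_sesBall (hU : IsOpen U) :
    sesqCoeffs '' sesBall U X Y =
      (univ.pi fun p : X × Y => holBall U ℂ (‖p.1‖ * ‖p.2‖)) ∩
        ⋂ z, (fun F φ ψ => F (φ, ψ) z) ⁻¹' {B | IsSesquilinear B} := by
  ext F
  constructor
  · rintro ⟨σ, ⟨hσ, hσ1⟩, rfl⟩
    refine ⟨fun p _ => ⟨(hσ.clm_apply p.1).clm_apply p.2, fun z => ?_⟩, ?_⟩
    · show ‖σ z p.1 p.2‖ ≤ _
      simpa only [one_mul] using (σ z).le_of_opNorm₂_le_of_le (hσ1 z) le_rfl (le_refl ‖p.2‖)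
    · simp [IsSesquilinear, sesqCoeffs]
  · rintro ⟨hhol, hsesq⟩
    have hB : ∀ z, IsSesquilinear fun φ ψ => F (φ, ψ) z := mem_iInter.1 hsesq
    have hbound : ∀ z φ ψ, ‖F (φ, ψ) z‖ ≤ 1 * ‖φ‖ * ‖ψ‖ := fun z φ ψ => by
      simpa only [one_mul] using (hhol (φ, ψ) (mem_univ _)).2 z
    let σ : ↥U → Sesq X Y := fun z => (hB z).toSesq 1 (hbound z)
    have hσ1 : ∀ z, ‖σ z‖ ≤ 1 := fun z => (hB z).norm_toSesq_le zero_le_one (hbound z)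
    exact ⟨σ, ⟨holFn_of_forall_apply_apply hU hσ1 fun φ ψ => (hhol (φ, ψ) (mem_univ _)).1,
      hσ1⟩, rfl⟩

theorem isCompact_sesBall (hU : IsOpen U) : @IsCompact _ (luses U X Y) (sesBall U X Y) := by
  let := kc U ℂ
  let := luses U X Y
  rw [isEmbedding_sesqCoeffs.isCompact_iff, image_sesqCoeffs_sesBall hU]
  refine (isCompact_univ_pi fun p => isCompact_holBall hU _).inter_right
    (isClosed_iInter fun z => isClosed_setOf_isSesquilinear.preimage ?_)
  exact continuous_pi fun φ => continuous_pi fun ψ =>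
    (continuous_apply_kc z).comp (continuous_apply (φ, ψ))

theorem metrizableSpace_sesBall [SeparableSpace X] [SeparableSpace Y] (hU : IsOpen U) :
    @MetrizableSpace (sesBall U X Y) (.induced Subtype.val (luses U X Y)) := by
  let := kc U ℂ
  let := luses U X Y
  have : CompactSpace (sesBall U X Y) := isCompact_iff_compactSpace.1 (isCompact_sesBall hU)
  obtain ⟨DU, hDU, hDU_dense⟩ := exists_countable_dense ↥U
  obtain ⟨DX, hDX, hDX_dense⟩ := exists_countable_dense X
  obtain ⟨DY, hDY, hDY_dense⟩ := exists_countable_dense Y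
  have := hDU.to_subtype
  have := hDX.to_subtype
  have := hDY.to_subtype
  let G : sesBall U X Y → DU × DX × DY → ℂ := fun σ i => σ.1 i.1 i.2.1 i.2.2
  have hG : Continuous G := continuous_pi fun i => (continuous_apply_kc i.1.1).comp <|
    (continuous_apply (i.2.1.1, i.2.2.1)).comp <|
      isEmbedding_sesqCoeffs.continuous.comp continuous_subtype_val
  have hG_inj : Function.Injective G := by
    intro σ τ h
    have hcoeff : ∀ φ ∈ DX, ∀ ψ ∈ DY, (fun z => σ.1 z φ ψ) = fun z => τ.1 z φ ψ :=
      fun φ hφ ψ hψ => ((σ.2.1.clm_apply φ).clm_apply ψ).continuous.ext_on hDU_dense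
        ((τ.2.1.clm_apply φ).clm_apply ψ).continuous fun z hz =>
          congrFun h (⟨z, hz⟩, ⟨φ, hφ⟩, ⟨ψ, hψ⟩)
    exact Subtype.ext <| funext fun z => ContinuousLinearMap.ext_of_dense₂ hDX_dense hDY_dense
      fun φ hφ ψ hψ => congrFun (hcoeff φ hφ ψ hψ) z
  exact (hG.isClosedEmbedding hG_inj).isEmbedding.metrizableSpace

end SesqForms

theorem statement_4_general (U : Set ℂ) (hU : IsOpen U)
    {X Y : Type*} [NormedAddCommGroup X] [InnerProductSpace ℂ X]
    [NormedAddCommGroup Y] [InnerProductSpace ℂ Y] :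
    @IsCompact _ (luses U X Y) (sesBall U X Y) ∧
    (TopologicalSpace.SeparableSpace X → TopologicalSpace.SeparableSpace Y →
      @TopologicalSpace.MetrizableSpace (↥(sesBall U X Y))
        (TopologicalSpace.induced Subtype.val (luses U X Y))) :=
  ⟨isCompact_sesBall hU, fun _ _ => metrizableSpace_sesBall hU⟩

/-- **Banach–Alaoglu for holomorphic sesquilinear forms.** The set
`K = {σ ∈ Hol(U,Ses_b(X,Y)) : ‖σ(z)‖ ≤ 1 ∀z}` is `𝒯_Λ̃`-compact; if `X` and `Y` are
separable then `(K,𝒯_Λ̃)` is metrisable. -/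
theorem statement_4 (U : Set ℂ) (hU : IsOpen U)
    {X Y : Type*} [NormedAddCommGroup X] [InnerProductSpace ℂ X] [CompleteSpace X]
    [NormedAddCommGroup Y] [InnerProductSpace ℂ Y] [CompleteSpace Y] :
    @IsCompact _ (luses U X Y) (sesBall U X Y) ∧
    (TopologicalSpace.SeparableSpace X → TopologicalSpace.SeparableSpace Y →
      @TopologicalSpace.MetrizableSpace (↥(sesBall U X Y))
        (TopologicalSpace.induced Subtype.val (luses U X Y))) :=
  statement_4_general U hU

end Paper
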